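/- In the quotient ring Γ̄ = Ā[r]/(q(r)), the image of η_R(a_4^5 − 2a_3^4a_4^2 − a_2a_3^2a_4^3 + 2a_2^2a_4^4 + a_2^3a_3^2a_4^2 + a_2^4a_4^3) equals the image of a_4^5 − 2a_3^4a_4^2 − a_2a_3^2a_4^3 + 2a_2^2a_4^4 + a_2^3a_3^2a_4^2 + a_2^4a_4^3; i.e. the mod-(5,a_1,a_5) discriminant is invariant modulo the relation q(r) = 0. -/

import Mathlib

/-!
`Abar = 𝔽_5[a_2,a_3,a_4]` (the variable `0,1,2 : Fin 3` are `a_2, a_3, a_4`),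
`q(t) = t^5 + a_2t^3 + a_3t^2 + a_4t`, and `etaR : Abar → Abar[r]` is the
𝔽_5-algebra map sending `a_i` to the coefficient of `x^{5-i}` in `q(x+r) - q(r)`,
computed in `Abar[r][x]`.  This is the reduction modulo `(5, a_1, a_5)` of the
Gorbounov–Hopkins–Mahowald Hopf algebroid at the prime `5`.
-/

/-- The ring `Ā = 𝔽_5[a_2,a_3,a_4]`. -/
abbrev Abar : Type := MvPolynomial (Fin 3) (ZMod 5)

/-- The generator `a_2`. -/
noncomputable def a2 : Abar := MvPolynomial.X 0
/-- The generator `a_3`. -/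
noncomputable def a3 : Abar := MvPolynomial.X 1
/-- The generator `a_4`. -/
noncomputable def a4 : Abar := MvPolynomial.X 2

/-- The polynomial `q(t) = t^5 + a_2t^3 + a_3t^2 + a_4t` as an element of `Ā[t]`. -/
noncomputable def q : Polynomial Abar :=
  Polynomial.X ^ 5 + Polynomial.C a2 * Polynomial.X ^ 3 + Polynomial.C a3 * Polynomial.X ^ 2 +
    Polynomial.C a4 * Polynomial.X

/-- `q(x+r) - q(r)`, an element of `Ā[r][x]` (the inner variable is `r`, the outer is `x`). -/
noncomputable def qShift : Polynomial (Polynomial Abar) :=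
  Polynomial.eval₂ (Polynomial.C.comp Polynomial.C)
      (Polynomial.X + Polynomial.C Polynomial.X) q -
    Polynomial.eval₂ (Polynomial.C.comp Polynomial.C) (Polynomial.C Polynomial.X) q

/-- The right unit `η_R : Ā → Ā[r]`, sending `a_i` (for `i = 2,3,4`) to the coefficient of
`x^{5-i}` in `q(x+r) - q(r)`. -/
noncomputable def etaR : Abar →ₐ[ZMod 5] Polynomial Abar :=
  MvPolynomial.aeval (fun k : Fin 3 => qShift.coeff (3 - k.1))

/-!
In characteristic `5` we have `(x + r)^5 = x^5 + r^5`, so `q(x + r) - q(r)` is again a quintic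
`x^5 + a₂'x^3 + a₃'x^2 + a₄'x` whose coefficients are the `η_R(a_i)`. When `q(r) = 0` this is
the translate `q(x + r)` of `q`, and discriminants are invariant under translation. Concretely,
`disc(η_R a) - disc(a) = q(r) · (2a₃⁵ - a₂³a₃³ + 2a₂⁴a₃a₄ - 2a₂⁵ q(r))` in characteristic `5`.
-/

open Polynomial

theorem quintic_shift_sub {R : Type*} [CommRing R] [CharP R 5] (a₂ a₃ a₄ r x : R) :
    (x + r) ^ 5 + a₂ * (x + r) ^ 3 + a₃ * (x + r) ^ 2 + a₄ * (x + r) -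
        (r ^ 5 + a₂ * r ^ 3 + a₃ * r ^ 2 + a₄ * r) =
      x ^ 5 + a₂ * x ^ 3 + (a₃ + 3 * a₂ * r) * x ^ 2 + (a₄ + 2 * a₃ * r + 3 * a₂ * r ^ 2) * x := by
  have : Fact (Nat.Prime 5) := ⟨Nat.prime_five⟩
  rw [add_pow_char]
  ring

theorem qShift_eq : qShift = X ^ 5 + C (C a2) * X ^ 3 + C (C a3 + 3 * C a2 * X) * X ^ 2 +
    C (C a4 + 2 * C a3 * X + 3 * C a2 * X ^ 2 : Abar[X]) * X := by
  conv_lhs => simp only [qShift, q, C_mul_X_pow_eq_monomial, C_mul_X_eq_monomial, eval₂_add,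
    eval₂_monomial, eval₂_X_pow, RingHom.coe_comp, Function.comp_apply, pow_one]
  rw [quintic_shift_sub (R := Abar[X][X])]
  simp only [map_add, map_mul, map_pow, map_ofNat]

theorem etaR_a2 : etaR a2 = C a2 := by
  simp only [etaR, a2, MvPolynomial.aeval_X, qShift_eq, coeff_add, coeff_X_pow, coeff_C_mul_X_pow,
    coeff_C_mul_X]
  norm_num

theorem etaR_a3 : etaR a3 = C a3 + 3 * C a2 * X := by
  simp only [etaR, a3, MvPolynomial.aeval_X, qShift_eq, coeff_add, coeff_X_pow, coeff_C_mul_X_pow,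
    coeff_C_mul_X]
  norm_num

theorem etaR_a4 : etaR a4 = C a4 + 2 * C a3 * X + 3 * C a2 * X ^ 2 := by
  simp only [etaR, a4, MvPolynomial.aeval_X, qShift_eq, coeff_add, coeff_X_pow, coeff_C_mul_X_pow,
    coeff_C_mul_X]
  norm_num

/-- The discriminant of `t^5 + a₂t^3 + a₃t^2 + a₄t`, with its coefficients reduced mod `5`. -/
def discMod5 {R : Type*} [CommRing R] (a₂ a₃ a₄ : R) : R :=
  a₄ ^ 5 - 2 * a₃ ^ 4 * a₄ ^ 2 - a₂ * a₃ ^ 2 * a₄ ^ 3 + 2 * a₂ ^ 2 * a₄ ^ 4 +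
    a₂ ^ 3 * a₃ ^ 2 * a₄ ^ 2 + a₂ ^ 4 * a₄ ^ 3

theorem map_discMod5 {R S F : Type*} [CommRing R] [CommRing S] [FunLike F R S]
    [RingHomClass F R S] (f : F) (a₂ a₃ a₄ : R) :
    f (discMod5 a₂ a₃ a₄) = discMod5 (f a₂) (f a₃) (f a₄) := by
  simp [discMod5, map_ofNat]

theorem discMod5_shift_sub_dvd {R : Type*} [CommRing R] [CharP R 5] (a₂ a₃ a₄ r : R) :
    r ^ 5 + a₂ * r ^ 3 + a₃ * r ^ 2 + a₄ * r ∣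
      discMod5 a₂ (a₃ + 3 * a₂ * r) (a₄ + 2 * a₃ * r + 3 * a₂ * r ^ 2) - discMod5 a₂ a₃ a₄ := by
  refine ⟨2 * a₃ ^ 5 - a₂ ^ 3 * a₃ ^ 3 + 2 * a₂ ^ 4 * a₃ * a₄ -
    2 * a₂ ^ 5 * (r ^ 5 + a₂ * r ^ 3 + a₃ * r ^ 2 + a₄ * r), ?_⟩
  rw [← sub_eq_zero]
  unfold discMod5
  ring_nf
  reduce_mod_char!

/-- In `Γ̄ = Ā[r]/(q(r))`, the image of the mod-`(5,a_1,a_5)` discriminant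
`a_4^5 − 2a_3^4a_4^2 − a_2a_3^2a_4^3 + 2a_2^2a_4^4 + a_2^3a_3^2a_4^2 + a_2^4a_4^3` is invariant. -/
theorem disc_invariant_mod_q :
    Ideal.Quotient.mk (Ideal.span {q})
        (etaR (a4 ^ 5 - 2 * a3 ^ 4 * a4 ^ 2 - a2 * a3 ^ 2 * a4 ^ 3 + 2 * a2 ^ 2 * a4 ^ 4 +
          a2 ^ 3 * a3 ^ 2 * a4 ^ 2 + a2 ^ 4 * a4 ^ 3)) =
      Ideal.Quotient.mk (Ideal.span {q})
        (Polynomial.C (a4 ^ 5 - 2 * a3 ^ 4 * a4 ^ 2 - a2 * a3 ^ 2 * a4 ^ 3 + 2 * a2 ^ 2 * a4 ^ 4 +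
          a2 ^ 3 * a3 ^ 2 * a4 ^ 2 + a2 ^ 4 * a4 ^ 3)) := by
  rw [Ideal.Quotient.eq, Ideal.mem_span_singleton]
  change q ∣ etaR (discMod5 a2 a3 a4) - C (discMod5 a2 a3 a4)
  rw [map_discMod5, map_discMod5, etaR_a2, etaR_a3, etaR_a4]
  exact discMod5_shift_sub_dvd (C a2) (C a3) (C a4) X
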